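/- In a labeled cons-free ATRS where all constructors take only base-type arguments, the rewrite relation →_{R_lab} is terminating: there is no infinite reduction sequence. -/

import Mathlib

/-! # Applicative term rewriting systems (ATRSs) -/

/-- Simple types over a countable set of sorts. -/
inductive Ty where
  | base : ℕ → Ty
  | arrow : Ty → Ty → Ty

/-- Type order: sorts have order 0, `σ ⇒ τ` has order `max (order σ + 1) (order τ)`. -/
def Ty.order : Ty → ℕ
  | .base _ => 0
  | .arrow σ τ => max (σ.order + 1) τ.order

/-- Applicative terms over a set `α` of function symbols, with variables `ℕ`. -/
inductive Tm (α : Type) where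
  | sym : α → Tm α
  | var : ℕ → Tm α
  | app : Tm α → Tm α → Tm α

mutual
  /-- Strict subterm: `t` is a strict subterm of `s₁ s₂` if it is a strict
  subterm of `s₁` or a subterm of `s₂` (heads of applications are not subterms). -/
  inductive StrSubtm {α : Type} : Tm α → Tm α → Prop where
    | left {t s u : Tm α} : StrSubtm t s → StrSubtm t (Tm.app s u)
    | right {t s u : Tm α} : Subtm t u → StrSubtm t (Tm.app s u)
  /-- Subterm: `t ⊴ s` iff `t = s` or `t` is a strict subterm of `s`. -/
  inductive Subtm {α : Type} : Tm α → Tm α → Prop where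
    | refl (s : Tm α) : Subtm s s
    | strict {t s : Tm α} : StrSubtm t s → Subtm t s
end

/-- A signature: which symbols are constructors, their types, and variable types. -/
structure Sig (α : Type) where
  Cons : α → Prop
  typeOf : α → Ty
  varTy : ℕ → Ty

/-- Typing judgement for applicative terms. -/
inductive HasTy {α : Type} (S : Sig α) : Tm α → Ty → Prop where
  | sym (f : α) : HasTy S (.sym f) (S.typeOf f)
  | var (x : ℕ) : HasTy S (.var x) (S.varTy x)
  | app {s t : Tm α} {σ τ : Ty} :
      HasTy S s (.arrow σ τ) → HasTy S t σ → HasTy S (.app s t) τ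

mutual
  /-- Patterns: a variable, or a constructor fully applied (to base type) to patterns. -/
  inductive Pat {α : Type} (S : Sig α) : Tm α → Prop where
    | var (x : ℕ) : Pat S (.var x)
    | cons {s : Tm α} : PatSpine S s → (∃ i, HasTy S s (.base i)) → Pat S s
  /-- A constructor applied to a (possibly incomplete) list of patterns. -/
  inductive PatSpine {α : Type} (S : Sig α) : Tm α → Prop where
    | head {f : α} : S.Cons f → PatSpine S (.sym f)
    | app {s t : Tm α} : PatSpine S s → Pat S t → PatSpine S (.app s t)
end

/-- Ground terms: terms without variables. -/
def Tm.ground {α : Type} : Tm α → Prop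
  | .sym _ => True
  | .var _ => False
  | .app s t => s.ground ∧ t.ground

/-- Data terms: ground patterns. -/
def IsData {α : Type} (S : Sig α) (s : Tm α) : Prop := Pat S s ∧ s.ground

/-- The set of variables of a term. -/
def Tm.vars {α : Type} : Tm α → Set ℕ
  | .sym _ => ∅
  | .var x => {x}
  | .app s t => s.vars ∪ t.vars

/-- Number of occurrences of variable `x` in a term. -/
def Tm.count {α : Type} (x : ℕ) : Tm α → ℕ
  | .sym _ => 0
  | .var y => if y = x then 1 else 0
  | .app s t => Tm.count x s + Tm.count x t

/-- Applying a substitution to a term. -/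
def subst {α : Type} (γ : ℕ → Tm α) : Tm α → Tm α
  | .sym f => .sym f
  | .var x => γ x
  | .app s t => .app (subst γ s) (subst γ t)

/-- A rewrite rule. -/
structure Rule (α : Type) where
  lhs : Tm α
  rhs : Tm α

/-- Left-hand side shape of a constructor rule:
a defined symbol applied to patterns. -/
inductive LhsSpine {α : Type} (S : Sig α) : Tm α → Prop where
  | head {f : α} : ¬ S.Cons f → LhsSpine S (.sym f)
  | app {s t : Tm α} : LhsSpine S s → Pat S t → LhsSpine S (.app s t)

/-- The head symbol of a term, if any. -/
def Tm.headSym {α : Type} : Tm α → Option α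
  | .sym f => some f
  | .var _ => none
  | .app s _ => s.headSym

/-- `t` has the form `c t₁ ⋯ t_m` with `c` a constructor. -/
def ConsHead {α : Type} (S : Sig α) (t : Tm α) : Prop :=
  ∃ f, t.headSym = some f ∧ S.Cons f

/-- A rule is cons-free if every constructor-headed subterm of the right-hand side
is a data term or a (strict) subterm of the left-hand side. -/
def ConsFreeRule {α : Type} (S : Sig α) (ρ : Rule α) : Prop :=
  ∀ t, Subtm t ρ.rhs → ConsHead S t → (IsData S t ∨ StrSubtm t ρ.lhs)

/-- A left-linear cons-free constructor rule (with well-typed sides of equal type,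
and variables of the right-hand side occurring on the left). -/
def GoodRule {α : Type} (S : Sig α) (ρ : Rule α) : Prop :=
  LhsSpine S ρ.lhs ∧
  (∀ x, Tm.count x ρ.lhs ≤ 1) ∧
  ρ.rhs.vars ⊆ ρ.lhs.vars ∧
  (∃ σ, HasTy S ρ.lhs σ ∧ HasTy S ρ.rhs σ) ∧
  ConsFreeRule S ρ

/-- One-step rewriting: closure of rule instances under application contexts. -/
inductive Rew {α : Type} (R : Set (Rule α)) : Tm α → Tm α → Prop where
  | root {ρ : Rule α} {γ : ℕ → Tm α} :
      ρ ∈ R → Rew R (subst γ ρ.lhs) (subst γ ρ.rhs)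
  | appL {s s' t : Tm α} : Rew R s s' → Rew R (.app s t) (.app s' t)
  | appR {s t t' : Tm α} : Rew R t t' → Rew R (.app s t) (.app s t')

/-- `s` is `B`-safe: every constructor-headed subterm of `s` lies in `B`. -/
def BSafe {α : Type} (S : Sig α) (B : Set (Tm α)) (s : Tm α) : Prop :=
  ∀ t, Subtm t s → ConsHead S t → t ∈ B

/-- `B` is a suitable set of data terms: it consists of data terms, is closed
under subterms, and contains all data subterms of right-hand sides of rules. -/
def GoodB {α : Type} (S : Sig α) (R : Set (Rule α)) (B : Set (Tm α)) : Prop :=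
  (∀ t ∈ B, IsData S t) ∧
  (∀ t ∈ B, ∀ u, Subtm u t → u ∈ B) ∧
  (∀ ρ ∈ R, ∀ t, Subtm t ρ.rhs → IsData S t → t ∈ B)

/-- Spine of a basic term: a defined symbol applied to data terms. -/
inductive BasicSpine {α : Type} (S : Sig α) : Tm α → Prop where
  | head {f : α} : ¬ S.Cons f → BasicSpine S (.sym f)
  | app {s t : Tm α} : BasicSpine S s → IsData S t → BasicSpine S (.app s t)

/-- Basic terms: a defined symbol applied to data terms, of base type. -/
def Basic {α : Type} (S : Sig α) (s : Tm α) : Prop :=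
  BasicSpine S s ∧ ∃ i, HasTy S s (.base i)

/-- The set `B_s`: data terms occurring in `s` or in a right-hand side of a rule. -/
def Bset {α : Type} (S : Sig α) (R : Set (Rule α)) (s : Tm α) : Set (Tm α) :=
  { t | IsData S t ∧ (Subtm t s ∨ ∃ ρ ∈ R, Subtm t ρ.rhs) }
/-! # Labeled systems -/

open Classical in
/-- `labelTm S i s` replaces every defined symbol `f` of `s` by its `i`-labeled
copy `(f, i)`; constructors are unaffected (they get the fixed label `0`). -/
noncomputable def labelTm {α : Type} (S : Sig α) (i : ℕ) : Tm α → Tm (α × ℕ)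
  | .sym f => .sym (f, if S.Cons f then 0 else i)
  | .var x => .var x
  | .app s t => .app (labelTm S i s) (labelTm S i t)

/-- Erasing labels. -/
def eraseTm {α : Type} : Tm (α × ℕ) → Tm α
  | .sym p => .sym p.1
  | .var x => .var x
  | .app s t => .app (eraseTm s) (eraseTm t)

/-- The labeled signature: each labeled copy keeps the status and type of the
original symbol. -/
def SigLab {α : Type} (S : Sig α) : Sig (α × ℕ) :=
  { Cons := fun p => S.Cons p.1
    typeOf := fun p => S.typeOf p.1
    varTy := S.varTy }

/-- The labeled rules: `f_{i+1} → f_i` for every defined symbol `f`, and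
`f_{i+1} ℓ₁ ⋯ ℓ_k → label_i(r)` for every rule `f ℓ₁ ⋯ ℓ_k → r` of `R`. -/
def RLab {α : Type} (S : Sig α) (R : Set (Rule α)) : Set (Rule (α × ℕ)) :=
  { ρ' | ∃ f i, ¬ S.Cons f ∧ ρ' = ⟨.sym (f, i + 1), .sym (f, i)⟩ } ∪
  { ρ' | ∃ ρ ∈ R, ∃ i, ρ' = ⟨labelTm S (i + 1) ρ.lhs, labelTm S i ρ.rhs⟩ }

/-- A symbol applied to a list of arguments. -/
def mkApp {α : Type} (h : Tm α) (l : List (Tm α)) : Tm α := l.foldl Tm.app h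

/-- All argument types of a type are of order 0 (base types). -/
def ConsArgsBase : Ty → Prop
  | .base _ => True
  | .arrow σ τ => σ.order = 0 ∧ ConsArgsBase τ

/-- Termination of a term: no infinite reduction starts from it. -/
def TerminatingTm {α : Type} (R : Set (Rule α)) (s : Tm α) : Prop :=
  ¬ ∃ seq : ℕ → Tm α, seq 0 = s ∧ ∀ n, Rew R (seq n) (seq (n + 1))

/-- The computability predicate, by recursion on types: a base-type term is
computable iff it is terminating; `s : σ ⇒ τ` is computable iff `s t` is
computable for every computable `t : σ`. -/
def Comp {α : Type} (S : Sig α) (R : Set (Rule α)) : Ty → Tm α → Prop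
  | .base _, s => TerminatingTm R s
  | .arrow σ τ, s => ∀ t, HasTy S t σ → Comp S R σ t → Comp S R τ (.app s t)

/-- Existence of a semi-outermost reduction from `s` to `t`. -/
inductive SemiOut {α : Type} (R : Set (Rule α)) : Tm α → Tm α → Prop where
  | refl (s : Tm α) : SemiOut R s s
  | step {f : α} {ss ls : List (Tm α)} {ρ : Rule α} {γ : ℕ → Tm α} {t : Tm α}
      (hρ : ρ ∈ R) (hl : ρ.lhs = mkApp (Tm.sym f) ls)
      (hle : ls.length ≤ ss.length)
      (hargs : ∀ j (hj : j < ls.length),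
        SemiOut R (ss[j]'(lt_of_lt_of_le hj hle)) (subst γ (ls[j]'hj)))
      (hvar : ∀ j (hj : j < ls.length), (∃ x, ls[j]'hj = Tm.var x) →
        ss[j]'(lt_of_lt_of_le hj hle) = subst γ (ls[j]'hj))
      (hrest : SemiOut R (mkApp (subst γ ρ.rhs) (ss.drop ls.length)) t) :
      SemiOut R (mkApp (Tm.sym f) ss) t

/-!
Tait-style computability, with termination built into every type, established for each
labeled symbol `f_i` by induction on `i`. Constructors and symbols `f_0` never head a redex, so
they are computable. A head reduct of `f_{i+1} t₁ ⋯ tₙ` with computable `tₖ` is `f_i t₁ ⋯ tₙ`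
or `label_i(r)γ t_{k+1} ⋯ tₙ` for a rule `f ℓ₁ ⋯ ℓ_k → r`. All symbols of `label_i(r)` have
label `i` or are constructors, and each `γ x` is computable: either `ℓⱼ = x` and `γ x = tⱼ`,
or `x` lies below a constructor, so it has base type and `γ x` is a subterm of the terminating
`tⱼ`. Computability of `f_{i+1}` follows by induction on the terminating arguments.
-/

namespace Tm

variable {β : Type}

def syms : Tm β → Set β
  | .sym f => {f}
  | .var _ => ∅
  | .app s t => s.syms ∪ t.syms

theorem headSym_mkApp (s : Tm β) (ts : List (Tm β)) : (mkApp s ts).headSym = s.headSym := by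
  induction ts generalizing s with
  | nil => rfl
  | cons t ts ih => exact ih (.app s t)

theorem mem_vars_mkApp {x : ℕ} (s : Tm β) (ts : List (Tm β)) :
    x ∈ (mkApp s ts).vars ↔ x ∈ s.vars ∨ ∃ q ∈ ts, x ∈ q.vars := by
  induction ts generalizing s with
  | nil => simp [mkApp]
  | cons t ts ih =>
    rw [show mkApp s (t :: ts) = mkApp (.app s t) ts from rfl, ih]
    simp only [Tm.vars, Set.mem_union, List.mem_cons, exists_eq_or_imp]
    tauto

def spine : Tm β → Tm β × List (Tm β)
  | .app s t => ((spine s).1, (spine s).2 ++ [t])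
  | s => (s, [])

theorem spine_mkApp_sym (f : β) (ts : List (Tm β)) : spine (mkApp (.sym f) ts) = (.sym f, ts) := by
  induction ts using List.reverseRecOn with
  | nil => rfl
  | append_singleton ts t ih =>
    rw [show mkApp (.sym f) (ts ++ [t]) = .app (mkApp (.sym f) ts) t by simp [mkApp]]
    simp [spine, ih]

theorem mkApp_sym_inj {f g : β} {ss ts : List (Tm β)}
    (h : mkApp (.sym f) ss = mkApp (.sym g) ts) : f = g ∧ ss = ts := by
  simpa [spine_mkApp_sym] using congrArg spine h

end Tm

variable {α β : Type}

theorem subst_var (u : Tm β) : subst .var u = u := by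
  induction u <;> simp [subst, *]

namespace HasTy

variable {S : Sig β}

theorem unique {u : Tm β} {σ τ : Ty} (hσ : HasTy S u σ) (hτ : HasTy S u τ) : σ = τ := by
  induction hσ generalizing τ with
  | sym f => cases hτ; rfl
  | var x => cases hτ; rfl
  | app _ _ ih _ => cases hτ with | app h _ => exact (Ty.arrow.inj (ih h)).2

theorem of_mkApp {h : Tm β} {ts : List (Tm β)} {σ : Ty} (hty : HasTy S (mkApp h ts) σ) :
    ∃ τ, HasTy S h τ := by
  induction ts generalizing h with
  | nil => exact ⟨σ, hty⟩
  | cons t ts ih =>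
    obtain ⟨τ, hτ⟩ := ih hty
    cases hτ with | app h _ => exact ⟨_, h⟩

end HasTy

/-! ## Rewriting and termination -/

inductive ArgStep (r : β → β → Prop) : List β → List β → Prop
  | head {a a' : β} {l : List β} : r a a' → ArgStep r (a :: l) (a' :: l)
  | tail {a : β} {l l' : List β} : ArgStep r l l' → ArgStep r (a :: l) (a :: l')

theorem acc_argStep {r : β → β → Prop} {l : List β} (hl : ∀ a ∈ l, Acc (flip r) a) :
    Acc (flip (ArgStep r)) l := by
  induction l with
  | nil => exact ⟨_, fun _ h => nomatch h⟩
  | cons a l ih =>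
    suffices hpair : ∀ p, Acc (Prod.GameAdd (flip r) (flip (ArgStep r))) p →
        Acc (flip (ArgStep r)) (p.1 :: p.2) from
      hpair _ ((hl a (by simp)).prod_gameAdd (ih fun b hb => hl b (by simp [hb])))
    intro p hp
    induction hp with
    | intro p _ ihp =>
      refine ⟨_, fun l' hl' => ?_⟩
      cases hl' with
      | head hr => exact ihp (_, p.2) (Prod.GameAdd.fst hr)
      | tail hs => exact ihp (p.1, _) (Prod.GameAdd.snd hs)

abbrev SN (R : Set (Rule β)) : Tm β → Prop := Acc (flip (Rew R))

section

variable {R : Set (Rule β)}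

theorem Rew.app_inv {s t w : Tm β} (h : Rew R (.app s t) w) :
    (∃ ρ γ, ρ ∈ R ∧ Tm.app s t = subst γ ρ.lhs ∧ w = subst γ ρ.rhs) ∨
    (∃ s', Rew R s s' ∧ w = .app s' t) ∨ (∃ t', Rew R t t' ∧ w = .app s t') := by
  generalize hu : Tm.app s t = u at h
  cases h with
  | root hρ => exact Or.inl ⟨_, _, hρ, rfl, rfl⟩
  | appL h => cases hu; exact Or.inr (Or.inl ⟨_, h, rfl⟩)
  | appR h => cases hu; exact Or.inr (Or.inr ⟨_, h, rfl⟩)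

theorem Rew.sym_inv {f : β} {w : Tm β} (h : Rew R (.sym f) w) :
    ∃ ρ γ, ρ ∈ R ∧ Tm.sym f = subst γ ρ.lhs ∧ w = subst γ ρ.rhs := by
  generalize hu : Tm.sym f = u at h
  cases h with
  | root hρ => exact ⟨_, _, hρ, rfl, rfl⟩
  | appL => cases hu
  | appR => cases hu

theorem Rew.mkApp_inv {s w : Tm β} {ts : List (Tm β)} (h : Rew R (mkApp s ts) w) :
    (∃ s', Rew R s s' ∧ w = mkApp s' ts) ∨
    (∃ ts', ArgStep (Rew R) ts ts' ∧ w = mkApp s ts') ∨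
    (∃ l₁ l₂ ρ γ, ρ ∈ R ∧ ts = l₁ ++ l₂ ∧ mkApp s l₁ = subst γ ρ.lhs ∧
      w = mkApp (subst γ ρ.rhs) l₂) := by
  induction ts generalizing s with
  | nil => exact Or.inl ⟨w, h, rfl⟩
  | cons t ts ih =>
    rcases ih h with ⟨_, hs, rfl⟩ | ⟨ts', hts, rfl⟩ | ⟨l₁, l₂, ρ, γ, hρ, rfl, hm, rfl⟩
    · rcases Rew.app_inv hs with ⟨ρ, γ, hρ, hm, rfl⟩ | ⟨s', hs', rfl⟩ | ⟨t', ht, rfl⟩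
      · exact Or.inr (Or.inr ⟨[t], ts, ρ, γ, hρ, rfl, hm, rfl⟩)
      · exact Or.inl ⟨s', hs', rfl⟩
      · exact Or.inr (Or.inl ⟨t' :: ts, .head ht, rfl⟩)
    · exact Or.inr (Or.inl ⟨t :: ts', .tail hts, rfl⟩)
    · exact Or.inr (Or.inr ⟨t :: l₁, l₂, ρ, γ, hρ, rfl, hm, rfl⟩)

theorem SN.of_app {s t : Tm β} (h : SN R (.app s t)) : SN R s ∧ SN R t := by
  generalize hu : Tm.app s t = u at h
  induction h generalizing s t with
  | intro u _ ih =>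
    subst hu
    exact ⟨⟨s, fun s' hs => (ih _ (Rew.appL hs) rfl).1⟩,
      ⟨t, fun t' ht => (ih _ (Rew.appR ht) rfl).2⟩⟩

theorem SN.of_subtm {s t : Tm β} (hs : SN R s) (h : Subtm t s) : SN R t := by
  induction s with
  | app a b iha ihb =>
    rcases h with _ | h
    · exact hs
    · rcases h with h | h
      · exact iha hs.of_app.1 (.strict h)
      · exact ihb hs.of_app.2 h
  | _ =>
    rcases h with _ | h
    · exact hs
    · cases h

theorem terminatingTm_of_sn {s : Tm β} (h : SN R s) : TerminatingTm R s := by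
  induction h with
  | intro s _ ih =>
    rintro ⟨seq, rfl, hseq⟩
    exact ih _ (hseq 0) ⟨fun n => seq (n + 1), rfl, fun n => hseq (n + 1)⟩

/-- Neither `s`, nor its reducts, nor any application `s t₁ ⋯ tₙ` is ever a redex. -/
def Inert (R : Set (Rule β)) (s : Tm β) : Prop :=
  ∀ ρ ∈ R, ∀ γ, (subst γ ρ.lhs).headSym ≠ s.headSym

theorem Inert.headSym_eq_of_rew {s s' : Tm β} (h : Rew R s s') (hs : Inert R s) :
    s'.headSym = s.headSym := by
  induction h with
  | root hρ => exact absurd rfl (hs _ hρ _)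
  | appL _ ih => exact ih hs
  | appR => rfl

theorem Inert.of_rew {s s' : Tm β} (hs : Inert R s) (h : Rew R s s') : Inert R s' := by
  unfold Inert
  rw [Inert.headSym_eq_of_rew h hs]
  exact hs

theorem Inert.sn_app {s t : Tm β} (hi : Inert R s) (hs : SN R s) (ht : SN R t) :
    SN R (.app s t) := by
  induction hs generalizing t with
  | intro s _ ihs =>
    induction ht with
    | intro t htf iht =>
      refine ⟨_, fun w hw => ?_⟩
      rcases Rew.app_inv hw with ⟨ρ, γ, hρ, heq, -⟩ | ⟨s', hs, rfl⟩ | ⟨t', ht, rfl⟩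
      · exact absurd (congrArg Tm.headSym heq).symm (hi ρ hρ γ)
      · exact ihs s' hs (hi.of_rew hs) ⟨t, htf⟩
      · exact iht t' ht

theorem Inert.sn_of_atomic {h : Tm β} (hi : Inert R h) (hh : ∀ a b, h ≠ .app a b) : SN R h := by
  refine ⟨_, fun w hw => ?_⟩
  cases hw with
  | root hρ => exact absurd rfl (hi _ hρ _)
  | appL => exact absurd rfl (hh _ _)
  | appR => exact absurd rfl (hh _ _)

/-! ## Computability -/

/-- Computability. Termination is part of the arrow case: a variable of type `σ` need not
exist, so the usual argument deriving termination from computability of `s x` is unavailable. -/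
def Red (R : Set (Rule β)) : Ty → Tm β → Prop
  | .base _, s => SN R s
  | .arrow σ τ, s => SN R s ∧ ∀ t, Red R σ t → Red R τ (.app s t)

theorem Red.sn {σ : Ty} {s : Tm β} (h : Red R σ s) : SN R s := by
  cases σ with
  | base => exact h
  | arrow => exact h.1

theorem Red.of_rew {σ : Ty} {s s' : Tm β} (h : Red R σ s) (hs : Rew R s s') : Red R σ s' := by
  induction σ generalizing s s' with
  | base => exact h.inv hs
  | arrow σ τ _ ih => exact ⟨h.1.inv hs, fun t ht => ih (h.2 t ht) (.appL hs)⟩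

theorem Inert.red {s : Tm β} (hi : Inert R s) (hs : SN R s) (σ : Ty) : Red R σ s := by
  induction σ generalizing s with
  | base => exact hs
  | arrow σ τ _ ih => exact ⟨hs, fun t ht => ih hi (hi.sn_app hs ht.sn)⟩

/-- `RedArgs R τ ts τ'`: `τ = σ₁ ⇒ ⋯ ⇒ σₙ ⇒ τ'` and each `tₖ` of `ts` is computable at `σₖ`. -/
inductive RedArgs (R : Set (Rule β)) : Ty → List (Tm β) → Ty → Prop
  | nil (τ : Ty) : RedArgs R τ [] τ
  | cons {σ τ τ' : Ty} {t : Tm β} {ts : List (Tm β)} :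
      Red R σ t → RedArgs R τ ts τ' → RedArgs R (.arrow σ τ) (t :: ts) τ'

namespace RedArgs

variable {τ τ' : Ty} {ts : List (Tm β)}

theorem red_mkApp (h : RedArgs R τ ts τ') {s : Tm β} (hs : Red R τ s) : Red R τ' (mkApp s ts) := by
  induction h generalizing s with
  | nil => exact hs
  | cons ht _ ih => exact ih (hs.2 _ ht)

theorem append_inv {l₁ l₂ : List (Tm β)} (h : RedArgs R τ (l₁ ++ l₂) τ') :
    ∃ τm, RedArgs R τ l₁ τm ∧ RedArgs R τm l₂ τ' := by
  induction l₁ generalizing τ with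
  | nil => exact ⟨τ, .nil τ, h⟩
  | cons t l₁ ih =>
    cases h with
    | cons ht hts =>
      obtain ⟨τm, h₁, h₂⟩ := ih hts
      exact ⟨τm, .cons ht h₁, h₂⟩

theorem sn_of_mem (h : RedArgs R τ ts τ') {t : Tm β} (ht : t ∈ ts) : SN R t := by
  induction h with
  | nil => cases ht
  | cons ht' _ ih =>
    rcases List.mem_cons.1 ht with rfl | ht
    · exact ht'.sn
    · exact ih ht

theorem of_argStep (h : RedArgs R τ ts τ') {ts' : List (Tm β)} (hs : ArgStep (Rew R) ts ts') :
    RedArgs R τ ts' τ' := by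
  induction hs generalizing τ with
  | head hr => cases h with | cons ht hts => exact .cons (ht.of_rew hr) hts
  | tail _ ih => cases h with | cons ht hts => exact .cons ht (ih hts)

theorem of_hasTy_mkApp {S : Sig α} {φ : Tm α → Tm β} {ls : List (Tm α)} {h : Tm α} {σ : Ty}
    (hh : HasTy S h τ) (hty : HasTy S (mkApp h ls) σ) (hargs : RedArgs R τ (ls.map φ) τ') :
    σ = τ' ∧ ∀ q ∈ ls, ∃ σq, HasTy S q σq ∧ Red R σq (φ q) := by
  induction ls generalizing h τ with
  | nil =>
    cases hargs
    exact ⟨hty.unique hh, by simp⟩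
  | cons q ls ih =>
    obtain ⟨ρ, hρ⟩ := HasTy.of_mkApp (ts := ls) hty
    cases hρ with
    | app hh' hq =>
      cases hh.unique hh'
      cases hargs with
      | cons hφq hrest =>
        obtain ⟨rfl, hls⟩ := ih (.app hh' hq) hty hrest
        refine ⟨rfl, fun q' hq' => ?_⟩
        rcases List.mem_cons.1 hq' with rfl | hq'
        · exact ⟨_, hq, hφq⟩
        · exact hls q' hq'

end RedArgs

theorem red_of_forall_redArgs {τ : Ty} {s : Tm β}
    (h : ∀ ts τ', RedArgs R τ ts τ' → SN R (mkApp s ts)) : Red R τ s := by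
  induction τ generalizing s with
  | base => exact h [] _ (.nil _)
  | arrow σ τ _ ih =>
    exact ⟨h [] _ (.nil _), fun t ht => ih fun ts τ' hts => h (t :: ts) τ' (.cons ht hts)⟩

theorem red_sym_of_head_reducts {f : β} {τ : Ty}
    (hroot : ∀ l₁ l₂ τ' ρ γ, ρ ∈ R → RedArgs R τ (l₁ ++ l₂) τ' →
      mkApp (.sym f) l₁ = subst γ ρ.lhs → SN R (mkApp (subst γ ρ.rhs) l₂)) :
    Red R τ (.sym f) := by
  refine red_of_forall_redArgs fun ts τ' hts => ?_
  -- induction on the arguments: they terminate, and rewriting one keeps the list computable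
  induction acc_argStep (fun t ht => hts.sn_of_mem ht) with
  | intro ts _ ih =>
    refine ⟨_, fun w hw => ?_⟩
    rcases Rew.mkApp_inv hw with ⟨s', hs, rfl⟩ | ⟨ts', hst, rfl⟩ | ⟨l₁, l₂, ρ, γ, hρ, rfl, hm, rfl⟩
    · obtain ⟨ρ, γ, hρ, hm, rfl⟩ := Rew.sym_inv hs
      exact hroot [] ts τ' ρ γ hρ hts hm
    · exact ih ts' hst (hts.of_argStep hst)
    · exact hroot l₁ l₂ τ' ρ γ hρ hts hm

theorem red_subst {S : Sig β} {γ : ℕ → Tm β} {u : Tm β} {σ : Ty} (hu : HasTy S u σ)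
    (hvars : ∀ x ∈ u.vars, Red R (S.varTy x) (γ x))
    (hsyms : ∀ f ∈ u.syms, Red R (S.typeOf f) (.sym f)) : Red R σ (subst γ u) := by
  induction hu with
  | sym f => exact hsyms f rfl
  | var x => exact hvars x rfl
  | app _ _ iha ihb =>
    exact (iha (fun x hx => hvars x (.inl hx)) (fun f hf => hsyms f (.inl hf))).2 _
      (ihb (fun x hx => hvars x (.inr hx)) (fun f hf => hsyms f (.inr hf)))

end

/-! ## The labeled system -/

theorem Ty.eq_base_of_order_eq_zero {σ : Ty} (h : σ.order = 0) : ∃ b, σ = .base b := by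
  cases σ with
  | base b => exact ⟨b, rfl⟩
  | arrow => simp [Ty.order] at h

theorem LhsSpine.eq_mkApp {S : Sig α} {l : Tm α} (h : LhsSpine S l) :
    ∃ f ls, ¬ S.Cons f ∧ l = mkApp (.sym f) ls ∧ ∀ q ∈ ls, Pat S q := by
  induction h with
  | head hf => exact ⟨_, [], hf, rfl, by simp⟩
  | @app s t _ hp ih =>
    obtain ⟨f, ls, hf, rfl, hpats⟩ := ih
    refine ⟨f, ls ++ [t], hf, by simp [mkApp], fun q hq => ?_⟩
    rcases List.mem_append.1 hq with hq | hq
    · exact hpats q hq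
    · rw [List.mem_singleton.1 hq]; exact hp

theorem PatSpine.varTy_base {S : Sig α} (hC : ∀ f, S.Cons f → ConsArgsBase (S.typeOf f))
    {q : Tm α} (hq : PatSpine S q) {τ : Ty} (hτ : HasTy S q τ) :
    ConsArgsBase τ ∧ ∀ x ∈ q.vars, ∃ b, S.varTy x = .base b := by
  induction q generalizing τ with
  | sym f =>
    cases hq with | head hf => cases hτ; exact ⟨hC f hf, by simp [Tm.vars]⟩
  | var => cases hq
  | app a b iha ihb =>
    cases hq with | app ha hb =>
    cases hτ with | app hτa hτb =>
    obtain ⟨⟨hσ, hτ⟩, hva⟩ := iha ha hτa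
    refine ⟨hτ, fun x hx => ?_⟩
    rcases hx with hx | hx
    · exact hva x hx
    · cases hb with
      | var y => cases hτb; cases hx; exact Ty.eq_base_of_order_eq_zero hσ
      | cons hps => exact (ihb hps hτb).2 x hx

theorem PatSpine.strSubtm_subst_labelTm {S : Sig α} (γ : ℕ → Tm (α × ℕ)) (i : ℕ) {q : Tm α}
    (hq : PatSpine S q) {x : ℕ} (hx : x ∈ q.vars) : StrSubtm (γ x) (subst γ (labelTm S i q)) := by
  induction q with
  | sym => cases hx
  | var => cases hq
  | app a b iha ihb =>
    cases hq with | app ha hb =>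
    rcases hx with hx | hx
    · exact .left (iha ha hx)
    · cases hb with
      | var y => cases hx; exact .right (.refl _)
      | cons hps => exact .right (.strict (ihb hps hx))

theorem HasTy.labelTm {S : Sig α} {u : Tm α} {τ : Ty} (i : ℕ) (h : HasTy S u τ) :
    HasTy (SigLab S) (labelTm S i u) τ := by
  induction h with
  | sym f => exact .sym (S := SigLab S) _
  | var x => exact .var x
  | app _ _ ih₁ ih₂ => exact .app ih₁ ih₂

theorem mem_vars_labelTm {S : Sig α} {i x : ℕ} {u : Tm α} :
    x ∈ (labelTm S i u).vars ↔ x ∈ u.vars := by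
  induction u with
  | app a b iha ihb => simp [labelTm, Tm.vars, iha, ihb]
  | _ => simp [labelTm, Tm.vars]

theorem mem_syms_labelTm {S : Sig α} {i : ℕ} {u : Tm α} {p : α × ℕ}
    (hp : p ∈ (labelTm S i u).syms) : S.Cons p.1 ∨ p.2 = i := by
  classical
  induction u with
  | sym f =>
    obtain rfl : p = (f, if S.Cons f then 0 else i) := hp
    by_cases hf : S.Cons f
    · exact .inl hf
    · simp [hf]
  | var => cases hp
  | app a b iha ihb => exact hp.elim iha ihb

theorem subst_labelTm_mkApp_sym {S : Sig α} {f : α} (hf : ¬ S.Cons f) (γ : ℕ → Tm (α × ℕ))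
    (i : ℕ) (ls : List (Tm α)) :
    subst γ (labelTm S i (mkApp (.sym f) ls)) =
      mkApp (.sym (f, i)) (ls.map fun q => subst γ (labelTm S i q)) := by
  induction ls using List.reverseRecOn with
  | nil => simp [mkApp, labelTm, subst, hf]
  | append_singleton ls q ih =>
    simp only [mkApp, List.foldl_append, List.map_append, List.foldl_cons, List.foldl_nil,
      List.map_cons, List.map_nil] at ih ⊢
    simp [labelTm, subst, ih]

/-- At the root `γ x` is the instance itself; below a constructor `x` has base type and
`γ x` is a subterm of a terminating term. -/
theorem red_of_mem_vars_pat (hC : ∀ f, S.Cons f → ConsArgsBase (S.typeOf f))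
    {R : Set (Rule (α × ℕ))} {γ : ℕ → Tm (α × ℕ)} {i : ℕ} {q : Tm α} {σ : Ty}
    (hq : Pat S q) (hσ : HasTy S q σ) (hred : Red R σ (subst γ (labelTm S i q)))
    {x : ℕ} (hx : x ∈ q.vars) : Red R (S.varTy x) (γ x) := by
  cases hq with
  | var y =>
    cases hx
    cases hσ
    exact hred
  | cons hps hbase =>
    obtain ⟨b, hb⟩ := hbase
    cases hσ.unique hb
    obtain ⟨b', hb'⟩ := (hps.varTy_base hC hb).2 x hx
    rw [hb']
    exact hred.of_subtm (.strict (hps.strSubtm_subst_labelTm γ i hx))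

theorem red_subst_rhs_labelTm (hC : ∀ f, S.Cons f → ConsArgsBase (S.typeOf f))
    {ρ : Rule α} (hρ : GoodRule S ρ) {j i : ℕ} {f : α} {γ : ℕ → Tm (α × ℕ)}
    {l₁ : List (Tm (α × ℕ))} {τ : Ty} {R : Set (Rule (α × ℕ))}
    (hsyms : ∀ p : α × ℕ, S.Cons p.1 ∨ p.2 = j → Red R (S.typeOf p.1) (.sym p))
    (heq : mkApp (.sym (f, j + 1)) l₁ = subst γ (labelTm S (i + 1) ρ.lhs))
    (hargs : RedArgs R (S.typeOf f) l₁ τ) :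
    Red R τ (subst γ (labelTm S i ρ.rhs)) := by
  obtain ⟨hspine, -, hvars, ⟨σ, hl, hr⟩, -⟩ := hρ
  obtain ⟨g, ls, hg, hlhs, hpats⟩ := hspine.eq_mkApp
  rw [hlhs, subst_labelTm_mkApp_sym hg] at heq
  obtain ⟨hfg, rfl⟩ := Tm.mkApp_sym_inj heq
  obtain ⟨rfl, hji⟩ := Prod.mk.inj hfg
  obtain rfl : j = i := Nat.succ_injective hji
  rw [hlhs] at hl hvars
  obtain ⟨rfl, hls⟩ := hargs.of_hasTy_mkApp (.sym f) hl
  have hγ : ∀ x ∈ (mkApp (.sym f) ls).vars, Red R (S.varTy x) (γ x) := by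
    intro x hx
    obtain ⟨q, hq, hxq⟩ := ((Tm.mem_vars_mkApp _ _).1 hx).resolve_left (by simp [Tm.vars])
    obtain ⟨σq, hσq, hredq⟩ := hls q hq
    exact red_of_mem_vars_pat hC (hpats q hq) hσq hredq hxq
  exact red_subst (hr.labelTm j) (fun x hx => hγ x (hvars (mem_vars_labelTm.1 hx)))
    fun p hp => hsyms p (mem_syms_labelTm hp)

section Labeled

variable {S : Sig α} {R : Set (Rule α)}

theorem subst_lhs_of_mem_RLab (hR : ∀ ρ ∈ R, LhsSpine S ρ.lhs) {ρ' : Rule (α × ℕ)}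
    (hρ' : ρ' ∈ RLab S R) (γ : ℕ → Tm (α × ℕ)) :
    ∃ f i ls, ¬ S.Cons f ∧ subst γ ρ'.lhs = mkApp (.sym (f, i + 1)) ls := by
  rcases hρ' with ⟨f, i, hf, rfl⟩ | ⟨ρ, hρ, i, rfl⟩
  · exact ⟨f, i, [], hf, rfl⟩
  · obtain ⟨f, ls, hf, hl, -⟩ := (hR ρ hρ).eq_mkApp
    exact ⟨f, i, _, hf, by rw [hl, subst_labelTm_mkApp_sym hf]⟩

/-- Only symbols `f_{i+1}` with `f` defined head left-hand sides of `RLab S R`. -/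
theorem inert_RLab (hR : ∀ ρ ∈ R, LhsSpine S ρ.lhs) {s : Tm (α × ℕ)}
    (hs : ∀ p, s.headSym = some p → S.Cons p.1 ∨ p.2 = 0) : Inert (RLab S R) s := by
  intro ρ' hρ' γ heq
  obtain ⟨f, i, ls, hf, hlhs⟩ := subst_lhs_of_mem_RLab hR hρ' γ
  rw [hlhs, Tm.headSym_mkApp] at heq
  rcases hs _ heq.symm with h | h
  · exact hf h
  · exact Nat.succ_ne_zero i h

theorem red_sym_of_cons_or_label_zero (hR : ∀ ρ ∈ R, LhsSpine S ρ.lhs) {p : α × ℕ}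
    (hp : S.Cons p.1 ∨ p.2 = 0) (σ : Ty) : Red (RLab S R) σ (.sym p) :=
  have hi : Inert (RLab S R) (.sym p) := inert_RLab hR fun _ h => Option.some_inj.1 h ▸ hp
  hi.red (hi.sn_of_atomic fun _ _ => nofun) σ

theorem red_var_RLab (hR : ∀ ρ ∈ R, LhsSpine S ρ.lhs) (x : ℕ) (σ : Ty) :
    Red (RLab S R) σ (.var x) :=
  have hi : Inert (RLab S R) (.var x) := inert_RLab hR fun _ h => nomatch h
  hi.red (hi.sn_of_atomic fun _ _ => nofun) σ

theorem sn_head_reduct_RLab (hR : ∀ ρ ∈ R, GoodRule S ρ)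
    (hC : ∀ f, S.Cons f → ConsArgsBase (S.typeOf f)) {j : ℕ}
    (hsyms : ∀ p : α × ℕ, S.Cons p.1 ∨ p.2 = j → Red (RLab S R) (S.typeOf p.1) (.sym p))
    {f : α} {l₁ l₂ : List (Tm (α × ℕ))} {τ : Ty} {ρ' : Rule (α × ℕ)} {γ : ℕ → Tm (α × ℕ)}
    (hρ' : ρ' ∈ RLab S R) (hargs : RedArgs (RLab S R) (S.typeOf f) (l₁ ++ l₂) τ)
    (heq : mkApp (.sym (f, j + 1)) l₁ = subst γ ρ'.lhs) :
    SN (RLab S R) (mkApp (subst γ ρ'.rhs) l₂) := by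
  obtain ⟨τm, h₁, h₂⟩ := hargs.append_inv
  refine (h₂.red_mkApp ?_).sn
  rcases hρ' with ⟨g, i, -, rfl⟩ | ⟨ρ, hρ, i, rfl⟩
  · obtain ⟨hfg, rfl⟩ := Tm.mkApp_sym_inj (ts := []) heq
    obtain ⟨rfl, hji⟩ := Prod.mk.inj hfg
    obtain rfl : j = i := Nat.succ_injective hji
    exact h₁.red_mkApp (hsyms (f, j) (.inr rfl))
  · exact red_subst_rhs_labelTm hC (hR ρ hρ) hsyms heq h₁

theorem red_sym_RLab (hR : ∀ ρ ∈ R, GoodRule S ρ)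
    (hC : ∀ f, S.Cons f → ConsArgsBase (S.typeOf f)) (p : α × ℕ) :
    Red (RLab S R) (S.typeOf p.1) (.sym p) := by
  have hlhs : ∀ ρ ∈ R, LhsSpine S ρ.lhs := fun ρ hρ => (hR ρ hρ).1
  obtain ⟨f, i⟩ := p
  induction i generalizing f with
  | zero => exact red_sym_of_cons_or_label_zero hlhs (.inr rfl) _
  | succ j ih =>
    have hsyms : ∀ p : α × ℕ, S.Cons p.1 ∨ p.2 = j → Red (RLab S R) (S.typeOf p.1) (.sym p) := by
      rintro ⟨g, k⟩ (hg | rfl)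
      · exact red_sym_of_cons_or_label_zero hlhs (.inl hg) _
      · exact ih g
    exact red_sym_of_head_reducts fun l₁ l₂ τ ρ γ hρ hargs heq =>
      sn_head_reduct_RLab hR hC hsyms hρ hargs heq

theorem red_of_hasTy_RLab (hR : ∀ ρ ∈ R, GoodRule S ρ)
    (hC : ∀ f, S.Cons f → ConsArgsBase (S.typeOf f)) {s : Tm (α × ℕ)} {σ : Ty}
    (h : HasTy (SigLab S) s σ) : Red (RLab S R) σ s := by
  simpa [subst_var] using red_subst (γ := .var) h
    (fun x _ => red_var_RLab (fun ρ hρ => (hR ρ hρ).1) x _) (fun p _ => red_sym_RLab hR hC p)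

end Labeled

/-- Termination of the labeled system: in a labeled cons-free ATRS whose
constructors take only base-type arguments, there is no infinite reduction of
well-typed labeled terms. -/
theorem labeled_terminating {α : Type} (S : Sig α) (R : Set (Rule α))
    (hR : ∀ ρ ∈ R, GoodRule S ρ)
    (hC : ∀ f, S.Cons f → ConsArgsBase (S.typeOf f)) :
    ¬ ∃ seq : ℕ → Tm (α × ℕ),
        (∀ n, ∃ σ, HasTy (SigLab S) (seq n) σ) ∧
        ∀ n, Rew (RLab S R) (seq n) (seq (n + 1)) := by
  rintro ⟨seq, hty, hstep⟩
  obtain ⟨σ, hσ⟩ := hty 0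
  exact terminatingTm_of_sn (red_of_hasTy_RLab hR hC hσ).sn ⟨seq, rfl, hstep⟩
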